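/- arXiv:math/0203111 — 2 statements merged into one kernel-verified Lean document; each statement's English description precedes it below -/
import Mathlib

section
/- For L > m ≥ 0, Q_m^L(q) = q^{m+1}(Q_{−2−m}^{L−1−m}(q) + 1). -/
namespace Dyson

/-- The rank of a partition: largest part minus number of parts. -/
def rank {n : ℕ} (π : n.Partition) : ℤ :=
  (π.parts.sup : ℤ) - π.parts.card

/-- The Euler product `(q;q)_∞`. -/
noncomputable def euler (q : ℝ) : ℝ := ∏' j : ℕ, (1 - q ^ (j + 1))

/-- `Q_m(q)`: generating function for nonempty partitions of rank ≥ m. -/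
noncomputable def Q (q : ℝ) (m : ℤ) : ℝ :=
  ∑' n : ℕ, (Nat.card {π : (n + 1).Partition // m ≤ rank π} : ℝ) * q ^ (n + 1)

noncomputable def qPoch (q : ℝ) (n : ℕ) : ℝ := ∏ j ∈ Finset.range n, (1 - q ^ (j + 1))

noncomputable def qbinom (q : ℝ) (a b : ℤ) : ℝ :=
  if 0 ≤ b ∧ b ≤ a then qPoch q a.toNat / (qPoch q b.toNat * qPoch q (a - b).toNat) else 0

noncomputable def QL (q : ℝ) (m L : ℤ) : ℝ :=
  ∑' n : ℕ,
    (Nat.card {π : (n + 1).Partition // m ≤ rank π ∧ (π.parts.sup : ℤ) ≤ L} : ℝ) * q ^ (n + 1)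

def partAt {n : ℕ} (π : n.Partition) (j : ℕ) : ℕ :=
  ((π.parts.sort (· ≤ ·)).reverse.getD j 0)

def inRankSet {n : ℕ} (π : n.Partition) (k : ℤ) : Prop :=
  ∃ j : ℕ, (j : ℤ) - partAt π (j + 1) = k

noncomputable def G (q : ℝ) (k : ℤ) : ℝ :=
  ∑' n : ℕ, (Nat.card {π : n.Partition // inRankSet π k} : ℝ) * q ^ n

def crank {n : ℕ} (π : n.Partition) : ℤ :=
  if π.parts.count 1 = 0 then (π.parts.sup : ℤ)
  else ((π.parts.filter (fun p => π.parts.count 1 < p)).card : ℤ) - π.parts.count 1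

/-! Dyson's map: remove the largest part `λ` of a partition of `N` with rank at least `m`,
conjugate the remaining parts and insert the part `λ - (m + 1)`. The rank condition says that
`λ - (m + 1)` is at least the number of remaining parts, which is the largest part of their
conjugate, so `λ - (m + 1)` becomes the new largest part. Hence the map is a bijection onto the
partitions of `N - (m + 1)` with rank at least `-2 - m` and largest part at most `L - 1 - m`,
whose inverse inserts `μ + (m + 1)` for the largest part `μ`. This holds for `N > m + 1`; the
single part `m + 1` is the only partition of `N ≤ m + 1` with rank at least `m`, and it accounts
for the term `q ^ (m + 1)`. -/

open Multiset

lemma sup_mem_of_ne_zero {s : Multiset ℕ} (hs : s ≠ 0) : s.sup ∈ s := by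
  obtain ⟨a, ha, hmax⟩ := s.exists_max_image id hs
  rwa [le_antisymm (Multiset.sup_le.2 hmax) (le_sup ha)]

lemma sup_erase_sup_le (s : Multiset ℕ) : (s.erase s.sup).sup ≤ s.sup :=
  sup_mono (erase_subset _ _)

def countGt (s : Multiset ℕ) (i : ℕ) : ℕ := s.countP (i < ·)

lemma countGt_antitone (s : Multiset ℕ) : Antitone (countGt s) := fun _ _ hij => by
  simpa only [countGt, countP_eq_card_filter] using
    card_le_card (monotone_filter_right s fun _ h => hij.trans_lt h)

lemma countGt_eq_zero {s : Multiset ℕ} {i : ℕ} (h : s.sup ≤ i) : countGt s i = 0 :=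
  countP_eq_zero.2 fun _ ha hlt => (le_sup ha).trans h |>.not_gt hlt

lemma countGt_zero {s : Multiset ℕ} (hs : ∀ a ∈ s, 0 < a) : countGt s 0 = card s :=
  countP_eq_card.2 hs

lemma countGt_eq_countGt_succ_add_count (s : Multiset ℕ) (i : ℕ) :
    countGt s i = countGt s (i + 1) + s.count (i + 1) := by
  induction s using Multiset.induction with
  | empty => simp [countGt]
  | cons a s ih =>
    simp only [countGt, countP_cons, count_cons] at ih ⊢
    split_ifs <;> omega

lemma eq_of_countGt_eq {s t : Multiset ℕ} (hs : ∀ a ∈ s, 0 < a) (ht : ∀ a ∈ t, 0 < a)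
    (h : countGt s = countGt t) : s = t := by
  ext (_ | i)
  · rw [count_eq_zero.2 fun h => (hs 0 h).false, count_eq_zero.2 fun h => (ht 0 h).false]
  · have := countGt_eq_countGt_succ_add_count s i
    have := countGt_eq_countGt_succ_add_count t i
    have := congrFun h i
    have := congrFun h (i + 1)
    omega

def conj (s : Multiset ℕ) : Multiset ℕ := (Multiset.range s.sup).map (countGt s)

lemma card_conj (s : Multiset ℕ) : card (conj s) = s.sup := by simp [conj]

lemma pos_of_mem_conj {s : Multiset ℕ} : ∀ a ∈ conj s, 0 < a := by
  simp only [conj, mem_map, Multiset.mem_range, forall_exists_index, and_imp]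
  rintro _ i hi rfl
  exact countP_pos.2 ⟨s.sup, sup_mem_of_ne_zero (by rintro rfl; simp at hi), hi⟩

lemma sup_conj {s : Multiset ℕ} (hs : ∀ a ∈ s, 0 < a) : (conj s).sup = card s := by
  rcases eq_or_ne s 0 with rfl | hne
  · simp [conj]
  have hsup := sup_mem_of_ne_zero hne
  refine le_antisymm (Multiset.sup_le.2 ?_) ?_
  · simp only [conj, mem_map, forall_exists_index, and_imp]
    rintro _ i _ rfl
    exact countP_le_card _ _
  · rw [← countGt_zero hs]
    exact le_sup (mem_map_of_mem _ (Multiset.mem_range.2 ((hs _ hsup).trans_le (le_sup hsup))))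

lemma sum_range_countGt {s : Multiset ℕ} {N : ℕ} (h : s.sup ≤ N) :
    ∑ i ∈ Finset.range N, countGt s i = s.sum := by
  induction s using Multiset.induction with
  | empty => simp [countGt]
  | cons a s ih =>
    rw [sup_cons, sup_le_iff] at h
    have hrange : (Finset.range N).filter (· < a) = Finset.range a := by
      ext i; simp only [Finset.mem_filter, Finset.mem_range]; omega
    simp only [countGt, countP_cons] at ih ⊢
    rw [Finset.sum_add_distrib, ih h.2, Finset.sum_boole, hrange, sum_cons]
    simp [add_comm]

lemma sum_conj (s : Multiset ℕ) : (conj s).sum = s.sum :=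
  sum_range_countGt le_rfl

/-- Both sides say that the Young diagram of `s` has a cell in row `j` and column `i`. -/
lemma lt_countGt_conj_iff {s : Multiset ℕ} {i j : ℕ} :
    i < countGt (conj s) j ↔ j < countGt s i := by
  have hcount : countGt (conj s) j = ((Finset.range s.sup).filter (j < countGt s ·)).card := by
    rw [conj, countGt, countP_map, Finset.card_def, Finset.filter_val, Finset.range_val,
      ← countP_eq_card_filter]
  rw [hcount]
  constructor
  · intro hi
    by_contra! hji
    have hsub : {i' ∈ Finset.range s.sup | j < countGt s i'} ⊆ Finset.range i := by
      intro i' hi'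
      simp only [Finset.mem_filter, Finset.mem_range] at hi' ⊢
      by_contra! hii'
      exact (hji.trans_lt hi'.2).not_ge (countGt_antitone s hii')
    simpa using (Finset.card_le_card hsub).trans_lt' hi
  · intro hj
    have hi : i < s.sup := by
      by_contra! h
      simp [countGt_eq_zero h] at hj
    have hsub : Finset.range (i + 1) ⊆ {i' ∈ Finset.range s.sup | j < countGt s i'} := by
      intro i' hi'
      simp only [Finset.mem_filter, Finset.mem_range] at hi' ⊢
      exact ⟨by omega, hj.trans_le (countGt_antitone s (by omega))⟩
    simpa using Finset.card_le_card hsub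

lemma conj_conj {s : Multiset ℕ} (hs : ∀ a ∈ s, 0 < a) : conj (conj s) = s := by
  refine eq_of_countGt_eq pos_of_mem_conj hs (funext fun j => eq_of_forall_lt_iff fun i => ?_)
  rw [lt_countGt_conj_iff, lt_countGt_conj_iff]

/-- With `f = (· - (m + 1))` this is Dyson's map, with inverse given by `f = (· + (m + 1))`. -/
def conjugateRest (f : ℕ → ℕ) (s : Multiset ℕ) : Multiset ℕ :=
  f s.sup ::ₘ conj (s.erase s.sup)

section conjugateRest

variable {f g : ℕ → ℕ} {s : Multiset ℕ}

lemma card_conjugateRest : card (conjugateRest f s) = (s.erase s.sup).sup + 1 := by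
  rw [conjugateRest, card_cons, card_conj]

lemma sum_conjugateRest (hne : s ≠ 0) : (conjugateRest f s).sum + s.sup = f s.sup + s.sum := by
  rw [conjugateRest, sum_cons, sum_conj, ← sum_erase (sup_mem_of_ne_zero hne)]
  ring

lemma sup_conjugateRest (hs : ∀ a ∈ s, 0 < a) (h : card s ≤ f s.sup + 1) :
    (conjugateRest f s).sup = f s.sup := by
  rw [conjugateRest, sup_cons, sup_conj fun a ha => hs a (mem_of_mem_erase ha)]
  rcases eq_or_ne s 0 with rfl | hne
  · simp
  rw [card_erase_of_mem (sup_mem_of_ne_zero hne)]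
  exact sup_eq_left.2 (by rw [Nat.pred_eq_sub_one]; omega)

lemma pos_of_mem_conjugateRest (hf : 0 < f s.sup) : ∀ a ∈ conjugateRest f s, 0 < a := by
  simp only [conjugateRest, mem_cons, forall_eq_or_imp]
  exact ⟨hf, fun _ => pos_of_mem_conj _⟩

lemma conjugateRest_conjugateRest (hs : ∀ a ∈ s, 0 < a) (hne : s ≠ 0)
    (h : card s ≤ f s.sup + 1) (hgf : g (f s.sup) = s.sup) :
    conjugateRest g (conjugateRest f s) = s := by
  rw [conjugateRest, sup_conjugateRest hs h, hgf, conjugateRest, erase_cons_head,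
    conj_conj fun a ha => hs a (mem_of_mem_erase ha), cons_erase (sup_mem_of_ne_zero hne)]

end conjugateRest

section Partition

variable {n : ℕ} (π : n.Partition)

lemma parts_ne_zero (hn : n ≠ 0) : π.parts ≠ 0 :=
  fun h => hn (by simpa [h, eq_comm] using π.parts_sum)

lemma sup_parts_le : π.parts.sup ≤ n :=
  Multiset.sup_le.2 fun _ ha => π.parts_sum ▸ le_sum_of_mem ha

lemma one_le_card_parts (hn : n ≠ 0) : 1 ≤ card π.parts :=
  card_pos.2 (parts_ne_zero π hn)

lemma rank_lt (hn : n ≠ 0) : rank π < n := by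
  have := sup_parts_le π
  have := one_le_card_parts π hn
  unfold rank
  omega

lemma parts_eq_singleton_of_card_eq_one (h : card π.parts = 1) : π.parts = {n} := by
  obtain ⟨a, ha⟩ := card_eq_one.1 h
  simpa [ha] using π.parts_sum

lemma parts_eq_singleton_of_le_rank (π : (n + 1).Partition) (h : (n : ℤ) ≤ rank π) :
    π.parts = {n + 1} := by
  have := sup_parts_le π
  have := one_le_card_parts π n.succ_ne_zero
  unfold rank at h
  exact parts_eq_singleton_of_card_eq_one π (by omega)

lemma add_two_le_sup_parts {m j : ℕ} (π : (j + m + 2).Partition) (h : (m : ℤ) ≤ rank π) :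
    m + 2 ≤ π.parts.sup := by
  by_contra! hsup
  have := one_le_card_parts π (by omega)
  unfold rank at h
  have hπ := parts_eq_singleton_of_card_eq_one π (by omega)
  simp [hπ] at hsup

end Partition

abbrev BoundedRank (n : ℕ) (m L : ℤ) : Type :=
  {π : n.Partition // m ≤ rank π ∧ (π.parts.sup : ℤ) ≤ L}

lemma card_boundedRank_eq_zero {m n : ℕ} (hn : n < m) (L : ℤ) :
    Nat.card (BoundedRank (n + 1) m L) = 0 := by
  have : IsEmpty (BoundedRank (n + 1) m L) :=
    ⟨fun π => (rank_lt π.1 n.succ_ne_zero).not_ge (by have := π.2.1; omega)⟩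
  exact Nat.card_of_isEmpty

lemma card_boundedRank_self {m : ℕ} {L : ℤ} (h : m < L) :
    Nat.card (BoundedRank (m + 1) m L) = 1 := by
  rw [Nat.card_eq_one_iff_unique]
  refine ⟨⟨fun π σ => Subtype.ext (Nat.Partition.ext ?_)⟩, ⟨⟨Nat.Partition.indiscrete (m + 1), ?_⟩⟩⟩
  · rw [parts_eq_singleton_of_le_rank π.1 π.2.1, parts_eq_singleton_of_le_rank σ.1 σ.2.1]
  · simp [rank, Nat.Partition.indiscrete_parts]
    omega

section dysonEquiv

variable {m j : ℕ} {L : ℤ}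

def dysonMap (π : BoundedRank (j + m + 2) m L) : BoundedRank (j + 1) (-2 - m) (L - 1 - m) := by
  have hrank := π.2.1
  have hsup := add_two_le_sup_parts π.1 hrank
  have hsup' := sup_conjugateRest (f := (· - (m + 1))) (fun _ => π.1.parts_pos)
    (by unfold rank at hrank; omega)
  refine ⟨⟨conjugateRest (· - (m + 1)) π.1.parts, pos_of_mem_conjugateRest (by omega) _, ?_⟩,
    ?_, ?_⟩
  · have := sum_conjugateRest (f := (· - (m + 1))) (parts_ne_zero π.1 (by omega))
    rw [π.1.parts_sum] at this
    omega
  · have := sup_erase_sup_le π.1.parts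
    unfold rank at hrank ⊢
    rw [hsup', card_conjugateRest]
    omega
  · have := π.2.2
    rw [hsup']
    omega

def dysonMapInv (σ : BoundedRank (j + 1) (-2 - m) (L - 1 - m)) : BoundedRank (j + m + 2) m L := by
  have hrank := σ.2.1
  have hsup' := sup_conjugateRest (f := (· + (m + 1))) (fun _ => σ.1.parts_pos)
    (by unfold rank at hrank; omega)
  refine ⟨⟨conjugateRest (· + (m + 1)) σ.1.parts, pos_of_mem_conjugateRest (by omega) _, ?_⟩,
    ?_, ?_⟩
  · have := sum_conjugateRest (f := (· + (m + 1))) (parts_ne_zero σ.1 (by omega))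
    rw [σ.1.parts_sum] at this
    omega
  · have := sup_erase_sup_le σ.1.parts
    unfold rank
    rw [hsup', card_conjugateRest]
    omega
  · have := σ.2.2
    rw [hsup']
    omega

def dysonEquiv (m j : ℕ) (L : ℤ) :
    BoundedRank (j + m + 2) m L ≃ BoundedRank (j + 1) (-2 - m) (L - 1 - m) where
  toFun := dysonMap
  invFun := dysonMapInv
  left_inv π := by
    have hrank := π.2.1
    have := add_two_le_sup_parts π.1 hrank
    unfold rank at hrank
    exact Subtype.ext <| Nat.Partition.ext <|
      conjugateRest_conjugateRest (f := (· - (m + 1))) (g := (· + (m + 1)))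
        (fun _ => π.1.parts_pos) (parts_ne_zero π.1 (by omega)) (by omega) (by omega)
  right_inv σ := by
    have hrank := σ.2.1
    unfold rank at hrank
    exact Subtype.ext <| Nat.Partition.ext <|
      conjugateRest_conjugateRest (f := (· + (m + 1))) (g := (· - (m + 1)))
        (fun _ => σ.1.parts_pos) (parts_ne_zero σ.1 (by omega)) (by omega) (by omega)

end dysonEquiv

lemma card_boundedRank_le (n : ℕ) (m L : ℤ) :
    Nat.card (BoundedRank n m L) ≤ (n + 1) ^ L.toNat := by
  let multiplicities (π : BoundedRank n m L) (i : Fin L.toNat) : Fin (n + 1) :=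
    ⟨π.1.parts.count ((i : ℕ) + 1), Nat.lt_succ_of_le <| (count_le_card _ _).trans <| by
      simpa [π.1.parts_sum] using card_nsmul_le_sum (a := 1) fun _ => π.1.parts_pos⟩
  have hinj : Function.Injective multiplicities := by
    intro π σ h
    refine Subtype.ext <| Nat.Partition.ext <| Multiset.ext.2 fun a => ?_
    rcases a with _ | a
    · rw [count_eq_zero.2 fun h => (π.1.parts_pos h).false,
        count_eq_zero.2 fun h => (σ.1.parts_pos h).false]
    by_cases ha : a < L.toNat
    · simpa [multiplicities] using congrArg Fin.val (congrFun h ⟨a, ha⟩)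
    · have hgt (τ : BoundedRank n m L) : a + 1 ∉ τ.1.parts := fun hmem => by
        have := le_sup hmem
        have := τ.2.2
        omega
      rw [count_eq_zero.2 (hgt π), count_eq_zero.2 (hgt σ)]
  simpa using Nat.card_le_card_of_injective multiplicities hinj

lemma summable_card_boundedRank_mul_pow {q : ℝ} (hq : |q| < 1) (m L : ℤ) :
    Summable fun n => (Nat.card (BoundedRank n m L) : ℝ) * q ^ n := by
  refine .of_norm <| summable_norm_mul_geometric_of_norm_lt_one (k := L.toNat)
    (by rwa [Real.norm_eq_abs]) <| Asymptotics.isBigO_iff.2 ⟨2 ^ L.toNat, ?_⟩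
  filter_upwards [Filter.eventually_ge_atTop 1] with n hn
  simp only [Real.norm_natCast]
  calc (Nat.card (BoundedRank n m L) : ℝ) ≤ ((n + 1) ^ L.toNat : ℕ) := by
        exact_mod_cast card_boundedRank_le n m L
    _ ≤ ((2 * n) ^ L.toNat : ℕ) := by gcongr; omega
    _ = 2 ^ L.toNat * ((n ^ L.toNat : ℕ) : ℝ) := by push_cast; ring

/-- for L > m ≥ 0,
`Q_m^L(q) = q^{m+1}(Q_{-2-m}^{L-1-m}(q) + 1)`. -/
theorem stmt8 (q : ℝ) (hq : |q| < 1) (m L : ℕ) (h : m < L) :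
    QL q m L = q ^ (m + 1) * (QL q (-2 - m) (L - 1 - m) + 1) := by
  let c (n : ℕ) : ℝ := Nat.card (BoundedRank (n + 1) m L) * q ^ (n + 1)
  have hc : Summable c := (summable_nat_add_iff 1).2 (summable_card_boundedRank_mul_pow hq m L)
  have hhead : ∑ i ∈ Finset.range (m + 1), c i = q ^ (m + 1) := by
    rw [Finset.sum_range_succ, Finset.sum_eq_zero fun i hi => by
      simp only [c, card_boundedRank_eq_zero (Finset.mem_range.1 hi), Nat.cast_zero, zero_mul]]
    simp only [c, card_boundedRank_self (m := m) (L := L) (by omega), Nat.cast_one, zero_add,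
      one_mul]
  have htail (n : ℕ) : c (n + (m + 1)) =
      q ^ (m + 1) * (Nat.card (BoundedRank (n + 1) (-2 - m) (L - 1 - m)) * q ^ (n + 1)) := by
    simp only [c, show n + (m + 1) + 1 = n + m + 2 by omega, Nat.card_congr (dysonEquiv m n L)]
    ring
  rw [QL, ← hc.sum_add_tsum_nat_add (m + 1), hhead, tsum_congr htail, tsum_mul_left, QL]
  ring

end Dyson
end

section
/- For every nonnegative integer L, 1 = Σ_{j=−∞}^{∞} (−1)^j q^{j(3j+1)/2} · qbinom(2L−j, L+j), a new polynomial analogue of Euler's pentagonal number theorem. -/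
namespace Dyson

section Aux
variable {q : ℝ}

lemma qPoch_zero' : qPoch q 0 = 1 := by simp [qPoch]

lemma qPoch_succ' (n : ℕ) : qPoch q (n + 1) = qPoch q n * (1 - q ^ (n + 1)) :=
  Finset.prod_range_succ _ n

lemma one_sub_pow_ne_zero (hq : |q| < 1) (n : ℕ) : (1 : ℝ) - q ^ (n + 1) ≠ 0 := by
  intro h
  rw [sub_eq_zero] at h
  have h1 : |q ^ (n + 1)| < 1 := by
    rw [abs_pow]
    exact pow_lt_one₀ (abs_nonneg q) hq (Nat.succ_ne_zero n)
  rw [← h] at h1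
  simp at h1

lemma qPoch_ne_zero (hq : |q| < 1) (n : ℕ) : qPoch q n ≠ 0 := by
  unfold qPoch
  rw [Finset.prod_ne_zero_iff]
  intro j _
  exact one_sub_pow_ne_zero hq j

lemma qbinom_eq_zero {a b : ℤ} (h : ¬(0 ≤ b ∧ b ≤ a)) : qbinom q a b = 0 := if_neg h

lemma qbinom_right_zero (hq : |q| < 1) {a : ℤ} (h : 0 ≤ a) : qbinom q a 0 = 1 := by
  unfold qbinom
  rw [if_pos ⟨le_refl 0, h⟩]
  rw [sub_zero]
  simp only [Int.toNat_zero, qPoch_zero', one_mul]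
  exact div_self (qPoch_ne_zero hq _)

lemma qbinom_self (hq : |q| < 1) {a : ℤ} (h : 0 ≤ a) : qbinom q a a = 1 := by
  unfold qbinom
  rw [if_pos ⟨h, le_refl a⟩]
  rw [sub_self]
  simp only [Int.toNat_zero, qPoch_zero', mul_one]
  exact div_self (qPoch_ne_zero hq _)

lemma qbinom_natCast (a b : ℕ) : qbinom q (a : ℤ) (b : ℤ)
    = if b ≤ a then qPoch q a / (qPoch q b * qPoch q (a - b)) else 0 := by
  unfold qbinom
  by_cases h : b ≤ a
  · rw [if_pos ⟨Int.ofNat_nonneg b, Int.ofNat_le.2 h⟩, if_pos h]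
    rw [← Nat.cast_sub h]
    simp [Int.toNat_natCast]
  · rw [if_neg (by omega), if_neg h]

lemma key1 (hq : |q| < 1) (b c : ℕ) :
    qPoch q (b + c + 2) / (qPoch q (b + 1) * qPoch q (c + 1))
      = qPoch q (b + c + 1) / (qPoch q b * qPoch q (c + 1))
        + q ^ (b + 1) * (qPoch q (b + c + 1) / (qPoch q (b + 1) * qPoch q c)) := by
  have e1 : qPoch q (b + c + 2) = qPoch q (b + c + 1) * (1 - q ^ (b + c + 2)) :=
    qPoch_succ' (b + c + 1)
  have e2 : qPoch q (b + 1) = qPoch q b * (1 - q ^ (b + 1)) := qPoch_succ' b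
  have e3 : qPoch q (c + 1) = qPoch q c * (1 - q ^ (c + 1)) := qPoch_succ' c
  have hb := qPoch_ne_zero hq b
  have hc := qPoch_ne_zero hq c
  have hb1 := one_sub_pow_ne_zero hq b
  have hc1 := one_sub_pow_ne_zero hq c
  rw [e1, e2, e3]
  field_simp
  ring

lemma key2 (hq : |q| < 1) (b c : ℕ) :
    qPoch q (b + c + 2) / (qPoch q (b + 1) * qPoch q (c + 1))
      = qPoch q (b + c + 1) / (qPoch q (b + 1) * qPoch q c)
        + q ^ (c + 1) * (qPoch q (b + c + 1) / (qPoch q b * qPoch q (c + 1))) := by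
  have e1 : qPoch q (b + c + 2) = qPoch q (b + c + 1) * (1 - q ^ (b + c + 2)) :=
    qPoch_succ' (b + c + 1)
  have e2 : qPoch q (b + 1) = qPoch q b * (1 - q ^ (b + 1)) := qPoch_succ' b
  have e3 : qPoch q (c + 1) = qPoch q c * (1 - q ^ (c + 1)) := qPoch_succ' c
  have hb := qPoch_ne_zero hq b
  have hc := qPoch_ne_zero hq c
  have hb1 := one_sub_pow_ne_zero hq b
  have hc1 := one_sub_pow_ne_zero hq c
  rw [e1, e2, e3]
  field_simp
  ring

/-- interior values: `qbinom (b+c+2) (b+1)` etc. -/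
lemma qbinom_interior (b c : ℕ) :
    qbinom q ((b : ℤ) + c + 2) ((b : ℤ) + 1)
      = qPoch q (b + c + 2) / (qPoch q (b + 1) * qPoch q (c + 1)) := by
  have h1 : ((b : ℤ) + c + 2) = ((b + c + 2 : ℕ) : ℤ) := by push_cast; ring
  have h2 : ((b : ℤ) + 1) = ((b + 1 : ℕ) : ℤ) := by push_cast; ring
  rw [h1, h2, qbinom_natCast, if_pos (by omega),
    show b + c + 2 - (b + 1) = c + 1 from by omega]

lemma qbinom_pascal1 (hq : |q| < 1) (n k : ℤ) (hnk : ¬(n = 0 ∧ k = 0)) :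
    qbinom q n k = qbinom q (n - 1) (k - 1) + q ^ k * qbinom q (n - 1) k := by
  by_cases h : 0 ≤ k ∧ k ≤ n
  · obtain ⟨hk0, hkn⟩ := h
    have hn1 : 1 ≤ n := by omega
    rcases eq_or_lt_of_le hk0 with hk | hk
    · -- k = 0
      rw [← hk, qbinom_right_zero hq (by omega : (0:ℤ) ≤ n),
        qbinom_eq_zero (by omega : ¬((0:ℤ) ≤ 0 - 1 ∧ (0:ℤ) - 1 ≤ n - 1)),
        qbinom_right_zero hq (by omega : (0:ℤ) ≤ n - 1)]
      simp
    rcases eq_or_lt_of_le hkn with hkn' | hkn'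
    · -- k = n
      rw [hkn', qbinom_self hq (by omega), qbinom_self hq (by omega),
        qbinom_eq_zero (by omega : ¬((0:ℤ) ≤ n ∧ n ≤ n - 1))]
      ring
    · -- 1 ≤ k ≤ n - 1
      obtain ⟨b, rfl⟩ : ∃ b : ℕ, k = (b : ℤ) + 1 := ⟨(k - 1).toNat, by omega⟩
      obtain ⟨c, hc⟩ : ∃ c : ℕ, n = (b : ℤ) + c + 2 := ⟨(n - b - 2).toNat, by omega⟩
      subst hc
      have e1 : qbinom q ((b:ℤ) + c + 2) ((b:ℤ) + 1)
          = qPoch q (b + c + 2) / (qPoch q (b + 1) * qPoch q (c + 1)) := qbinom_interior b c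
      have e2 : qbinom q ((b:ℤ) + c + 2 - 1) ((b:ℤ) + 1 - 1)
          = qPoch q (b + c + 1) / (qPoch q b * qPoch q (c + 1)) := by
        have h1 : ((b : ℤ) + c + 2 - 1) = ((b + c + 1 : ℕ) : ℤ) := by push_cast; ring
        have h2 : ((b : ℤ) + 1 - 1) = ((b : ℕ) : ℤ) := by push_cast; ring
        rw [h1, h2, qbinom_natCast, if_pos (by omega),
          show b + c + 1 - b = c + 1 from by omega]
      have e3 : qbinom q ((b:ℤ) + c + 2 - 1) ((b:ℤ) + 1)
          = qPoch q (b + c + 1) / (qPoch q (b + 1) * qPoch q c) := by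
        have h1 : ((b : ℤ) + c + 2 - 1) = ((b + c + 1 : ℕ) : ℤ) := by push_cast; ring
        have h2 : ((b : ℤ) + 1) = ((b + 1 : ℕ) : ℤ) := by push_cast; ring
        rw [h1, h2, qbinom_natCast, if_pos (by omega),
          show b + c + 1 - (b + 1) = c from by omega]
      rw [e1, e2, e3]
      have hz : q ^ ((b:ℤ) + 1) = q ^ (b + 1 : ℕ) := by
        rw [show ((b:ℤ) + 1) = ((b + 1 : ℕ) : ℤ) by push_cast; ring, zpow_natCast]
      rw [hz]
      exact key1 hq b c
  · rw [qbinom_eq_zero h, qbinom_eq_zero (show ¬(0 ≤ k - 1 ∧ k - 1 ≤ n - 1) by omega),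
      qbinom_eq_zero (show ¬(0 ≤ k ∧ k ≤ n - 1) by omega)]
    ring

lemma qbinom_pascal2 (hq : |q| < 1) (n k : ℤ) (hnk : ¬(n = 0 ∧ k = 0)) :
    qbinom q n k = qbinom q (n - 1) k + q ^ (n - k) * qbinom q (n - 1) (k - 1) := by
  by_cases h : 0 ≤ k ∧ k ≤ n
  · obtain ⟨hk0, hkn⟩ := h
    have hn1 : 1 ≤ n := by omega
    rcases eq_or_lt_of_le hkn with hkn' | hkn'
    · -- k = n
      rw [hkn', qbinom_self hq (by omega), qbinom_eq_zero (by omega : ¬((0:ℤ) ≤ n ∧ n ≤ n - 1)),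
        sub_self, qbinom_self hq (by omega)]
      simp
    rcases eq_or_lt_of_le hk0 with hk | hk
    · -- k = 0
      rw [← hk, qbinom_right_zero hq (by omega : (0:ℤ) ≤ n),
        qbinom_right_zero hq (by omega : (0:ℤ) ≤ n - 1),
        qbinom_eq_zero (by omega : ¬((0:ℤ) ≤ 0 - 1 ∧ (0:ℤ) - 1 ≤ n - 1))]
      ring
    · -- 1 ≤ k ≤ n - 1
      obtain ⟨b, rfl⟩ : ∃ b : ℕ, k = (b : ℤ) + 1 := ⟨(k - 1).toNat, by omega⟩
      obtain ⟨c, hc⟩ : ∃ c : ℕ, n = (b : ℤ) + c + 2 := ⟨(n - b - 2).toNat, by omega⟩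
      subst hc
      have e1 : qbinom q ((b:ℤ) + c + 2) ((b:ℤ) + 1)
          = qPoch q (b + c + 2) / (qPoch q (b + 1) * qPoch q (c + 1)) := qbinom_interior b c
      have e2 : qbinom q ((b:ℤ) + c + 2 - 1) ((b:ℤ) + 1 - 1)
          = qPoch q (b + c + 1) / (qPoch q b * qPoch q (c + 1)) := by
        have h1 : ((b : ℤ) + c + 2 - 1) = ((b + c + 1 : ℕ) : ℤ) := by push_cast; ring
        have h2 : ((b : ℤ) + 1 - 1) = ((b : ℕ) : ℤ) := by push_cast; ring
        rw [h1, h2, qbinom_natCast, if_pos (by omega),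
          show b + c + 1 - b = c + 1 from by omega]
      have e3 : qbinom q ((b:ℤ) + c + 2 - 1) ((b:ℤ) + 1)
          = qPoch q (b + c + 1) / (qPoch q (b + 1) * qPoch q c) := by
        have h1 : ((b : ℤ) + c + 2 - 1) = ((b + c + 1 : ℕ) : ℤ) := by push_cast; ring
        have h2 : ((b : ℤ) + 1) = ((b + 1 : ℕ) : ℤ) := by push_cast; ring
        rw [h1, h2, qbinom_natCast, if_pos (by omega),
          show b + c + 1 - (b + 1) = c from by omega]
      rw [e1, e2, e3]
      have hz : q ^ ((b:ℤ) + c + 2 - ((b:ℤ) + 1)) = q ^ (c + 1 : ℕ) := by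
        rw [show ((b:ℤ) + c + 2 - ((b:ℤ) + 1)) = ((c + 1 : ℕ) : ℤ) by push_cast; ring,
          zpow_natCast]
      rw [hz]
      exact key2 hq b c
  · rw [qbinom_eq_zero h, qbinom_eq_zero (show ¬(0 ≤ k ∧ k ≤ n - 1) by omega),
      qbinom_eq_zero (show ¬(0 ≤ k - 1 ∧ k - 1 ≤ n - 1) by omega)]
    ring

lemma summable_aux (q : ℝ) (e : ℤ → ℤ) (N K : ℤ) :
    Summable (fun j : ℤ => (-1 : ℝ) ^ j * q ^ (e j) * qbinom q (N - j) (K + j)) := by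
  apply summable_of_ne_finset_zero (s := Finset.Icc (-K) (max 0 (N - K)))
  intro j hj
  rw [Finset.mem_Icc] at hj
  rw [qbinom_eq_zero (by omega), mul_zero]

lemma step_aux {q : ℝ} (hq : |q| < 1) (hq0 : q ≠ 0) (L : ℤ) (hL : 0 ≤ L) :
    (∑' j : ℤ, (-1 : ℝ) ^ j * q ^ (j * (3 * j + 1) / 2)
        * qbinom q (2 * (L + 1) - j) ((L + 1) + j))
      = ∑' j : ℤ, (-1 : ℝ) ^ j * q ^ (j * (3 * j + 1) / 2) * qbinom q (2 * L - j) (L + j) := by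
  have hm1 : (-1 : ℝ) ≠ 0 := by norm_num
  set p : ℤ → ℤ := fun j => j * (3 * j + 1) / 2 with hp
  -- the four families
  set tB : ℤ → ℝ := fun j => (-1 : ℝ) ^ j * q ^ (p j) * qbinom q (2 * L + 1 - j) (L + 1 + j)
    with htB
  set tC : ℤ → ℝ := fun j => (-1 : ℝ) ^ j * q ^ (p j + (L + 1 - 2 * j))
      * qbinom q (2 * L + 1 - j) (L + j) with htC
  set tD : ℤ → ℝ := fun j => (-1 : ℝ) ^ j * q ^ (p j + (L + 1 + j))
      * qbinom q (2 * L - j) (L + 1 + j) with htD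
  have sB : Summable tB := summable_aux q p (2 * L + 1) (L + 1)
  have sC : Summable tC := summable_aux q (fun j => p j + (L + 1 - 2 * j)) (2 * L + 1) L
  have sD : Summable tD := summable_aux q (fun j => p j + (L + 1 + j)) (2 * L) (L + 1)
  have sA : Summable (fun j : ℤ =>
      (-1 : ℝ) ^ j * q ^ (p j) * qbinom q (2 * L - j) (L + j)) :=
    summable_aux q p (2 * L) L
  -- (i) split via pascal2
  have hi : ∀ j : ℤ, (-1 : ℝ) ^ j * q ^ (p j) * qbinom q (2 * (L + 1) - j) ((L + 1) + j)
      = tB j + tC j := by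
    intro j
    have hP := qbinom_pascal2 hq (2 * (L + 1) - j) ((L + 1) + j) (by omega)
    rw [show 2 * (L + 1) - j - 1 = 2 * L + 1 - j from by ring,
      show (L + 1) + j - 1 = L + j from by ring,
      show 2 * (L + 1) - j - ((L + 1) + j) = L + 1 - 2 * j from by ring] at hP
    simp only [htB, htC]
    rw [hP, zpow_add₀ hq0 (p j) (L + 1 - 2 * j)]
    ring
  -- (ii) split tB via pascal1
  have hii : ∀ j : ℤ, tB j
      = (-1 : ℝ) ^ j * q ^ (p j) * qbinom q (2 * L - j) (L + j) + tD j := by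
    intro j
    have hP := qbinom_pascal1 hq (2 * L + 1 - j) (L + 1 + j) (by omega)
    rw [show 2 * L + 1 - j - 1 = 2 * L - j from by ring,
      show L + 1 + j - 1 = L + j from by ring] at hP
    simp only [htB, htD]
    rw [hP, zpow_add₀ hq0 (p j) (L + 1 + j)]
    ring
  -- (iii) shift: tC (j + 1) = - tD j
  have hiii : ∀ j : ℤ, tC (j + 1) = - tD j := by
    intro j
    simp only [htC, htD]
    have hexp : p (j + 1) + (L + 1 - 2 * (j + 1)) = p j + (L + 1 + j) := by
      have h1 : (j + 1) * (3 * (j + 1) + 1) = j * (3 * j + 1) + (3 * j + 2) * 2 := by ring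
      have h2 : p (j + 1) = p j + (3 * j + 2) := by
        rw [hp]
        dsimp only
        rw [h1, Int.add_mul_ediv_right _ _ (two_ne_zero)]
      rw [h2]
      ring
    rw [hexp, show 2 * L + 1 - (j + 1) = 2 * L - j from by ring,
      show L + (j + 1) = L + 1 + j from by ring,
      zpow_add₀ hm1 j 1]
    ring
  calc (∑' j : ℤ, (-1 : ℝ) ^ j * q ^ (p j) * qbinom q (2 * (L + 1) - j) ((L + 1) + j))
      = ∑' j : ℤ, (tB j + tC j) := tsum_congr hi
    _ = (∑' j, tB j) + ∑' j, tC j := Summable.tsum_add sB sC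
    _ = ((∑' j : ℤ, (-1 : ℝ) ^ j * q ^ (p j) * qbinom q (2 * L - j) (L + j)) + ∑' j, tD j)
        + ∑' j, tC j := by rw [tsum_congr hii, Summable.tsum_add sA sD]
    _ = ((∑' j : ℤ, (-1 : ℝ) ^ j * q ^ (p j) * qbinom q (2 * L - j) (L + j)) + ∑' j, tD j)
        + ∑' j, tC (j + 1) := by
          have hshift : ∑' j : ℤ, tC (j + 1) = ∑' j : ℤ, tC j := by
            simpa using (Equiv.addRight (1 : ℤ)).tsum_eq tC
          rw [hshift]
    _ = ((∑' j : ℤ, (-1 : ℝ) ^ j * q ^ (p j) * qbinom q (2 * L - j) (L + j)) + ∑' j, tD j)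
        + ∑' j, - tD j := by rw [tsum_congr hiii]
    _ = ∑' j : ℤ, (-1 : ℝ) ^ j * q ^ (p j) * qbinom q (2 * L - j) (L + j) := by
          rw [tsum_neg]; ring

lemma qPoch_zero_left (n : ℕ) : qPoch (0 : ℝ) n = 1 := by
  simp [qPoch]

theorem stmt11_aux (q : ℝ) (hq : |q| < 1) (L : ℕ) :
    (1 : ℝ) = ∑' j : ℤ,
      (-1 : ℝ) ^ j * q ^ (j * (3 * j + 1) / 2) * qbinom q (2 * L - j) (L + j) := by
  rcases eq_or_ne q 0 with rfl | hq0
  · -- q = 0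
    symm
    rw [tsum_eq_single (0 : ℤ) ?_]
    · norm_num
      unfold qbinom
      rw [if_pos ⟨by positivity, by omega⟩]
      simp [qPoch_zero_left]
    · intro j hj
      have h2 : 2 ≤ j * (3 * j + 1) := by
        rcases lt_or_gt_of_ne hj with h | h
        · nlinarith
        · nlinarith
      have h3 : j * (3 * j + 1) / 2 ≠ 0 := by
        generalize j * (3 * j + 1) = N at h2
        omega
      rw [zero_zpow _ h3]
      ring
  · -- q ≠ 0
    induction L with
    | zero =>
      symm
      rw [tsum_eq_single (0 : ℤ) ?_]
      · norm_num
        rw [qbinom_self hq le_rfl]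
      · intro j hj
        rw [qbinom_eq_zero (by push_cast; omega)]
        ring
    | succ L ih =>
      push_cast
      rw [step_aux hq hq0 (L : ℤ) (by positivity)]
      exact ih

end Aux

/-- `1 = Σ_{j∈ℤ} (-1)^j q^{j(3j+1)/2} qbinom(2L-j, L+j)`. -/
theorem stmt11 (q : ℝ) (hq : |q| < 1) (L : ℕ) :
    (1 : ℝ) = ∑' j : ℤ,
      (-1 : ℝ) ^ j * q ^ (j * (3 * j + 1) / 2) * qbinom q (2 * L - j) (L + j) :=
  stmt11_aux q hq L

end Dyson
end
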